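/- arXiv:2604.17011 — 6 statements merged into one kernel-verified Lean document; each statement's English description precedes it below -/
import Mathlib

section
/- Let G be a finite (additive) abelian group, t an automorphism of G, and E the edge relation of the Cayley graph of the Alexander quandle A_t(G). Then for all a, x ∈ G, x is reachable from a by a directed path (i.e. the reflexive–transitive closure of E relates a to x) if and only if x − a ∈ im(id − t). Hence the connected components of the Cayley graph are exactly the cosets of the subgroup im(id − t), each inducing a complete subgraph, and the Cayley graph is a disjoint union of |G|/|im(id − t)| copies of the complete directed graph on |im(id − t)| vertices. -/
/-- For a finite abelian group `G` and automorphism `t`, in the Cayley graph of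
the Alexander quandle `A_t(G)`: `x` is reachable from `a` iff
`x - a ∈ im(id - t)`.  Hence the connected components are exactly the cosets of
`im(id - t)`, each inducing a complete subgraph (an edge `a → x` exists iff `x`
is in the component of `a`), each component has `|im(id - t)|` elements, and
there are `|G| / |im(id - t)|` components. -/
theorem alexander_quandle_cayley_components (G : Type*) [AddCommGroup G] [Finite G]
    (t : G ≃+ G) (E : G → G → Prop)
    (hE : ∀ a c : G, E a c ↔ ∃ y : G, c = t a + y - t y)
    (I : Set G) (hI : I = Set.range fun d : G => d - t d) :
    (∀ a x : G, Relation.ReflTransGen E a x ↔ x - a ∈ I) ∧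
    (∀ a x : G, E a x ↔ x - a ∈ I) ∧
    (∀ a : G, Nat.card {x : G | Relation.ReflTransGen E a x} = Nat.card I) ∧
    Nat.card {s : Set G | ∃ a : G, s = {x : G | Relation.ReflTransGen E a x}} =
      Nat.card G / Nat.card I := by
  -- the homomorphism d ↦ d - t d
  set f : G →+ G := AddMonoidHom.mk' (fun d => d - t d)
    (by intro a b; simp only [map_add]; abel) with hf
  have hIr : I = (f.range : Set G) := by
    rw [hI]; ext x
    simp [f, AddMonoidHom.mem_range, eq_comm]
  -- edges
  have key : ∀ a x : G, E a x ↔ x - a ∈ I := by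
    intro a x
    rw [hE, hIr]
    constructor
    · rintro ⟨y, rfl⟩
      exact ⟨y - a, by simp [f, map_sub]; abel⟩
    · rintro ⟨d, hd⟩
      refine ⟨d + a, ?_⟩
      have : d - t d = x - a := hd
      have : x = a + (d - t d) := by rw [this]; abel
      rw [this]; simp [map_add]; abel
  have hzero : ∀ a : G, a - a ∈ I := by
    intro a; rw [hIr, sub_self]; exact AddSubgroup.zero_mem f.range
  have hI_add : ∀ {u v : G}, u ∈ I → v ∈ I → u + v ∈ I := by
    rw [hIr]; intro u v hu hv; exact AddSubgroup.add_mem _ hu hv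
  -- reachability
  have rtg : ∀ a x : G, Relation.ReflTransGen E a x ↔ x - a ∈ I := by
    intro a x
    constructor
    · intro h
      induction h with
      | refl => exact hzero a
      | tail _ he ih =>
        rename_i b c _
        have hbc : c - b ∈ I := (key b c).mp he
        have : c - a = (c - b) + (b - a) := by abel
        rw [this]; exact hI_add hbc ih
    · intro h
      exact Relation.ReflTransGen.single ((key a x).mpr h)
  refine ⟨rtg, key, ?_, ?_⟩
  · intro a
    have hset : {x : G | Relation.ReflTransGen E a x} = {x : G | x - a ∈ I} := by
      ext x; exact rtg a x
    rw [hset]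
    exact Nat.card_congr ((Equiv.subRight a).subtypeEquiv (fun x => Iff.rfl))
  · -- number of components
    have hcomp : ∀ a : G, {x : G | Relation.ReflTransGen E a x} = {x : G | x - a ∈ I} := by
      intro a; ext x; exact rtg a x
    have hcompeq : ∀ a b : G, a - b ∈ I →
        {x : G | x - a ∈ I} = {x : G | x - b ∈ I} := by
      intro a b hab
      ext x
      simp only [Set.mem_setOf_eq]
      constructor
      · intro h
        have : x - b = (x - a) + (a - b) := by abel
        rw [this]; exact hI_add h hab
      · intro h
        have hba : b - a ∈ I := by
          have : b - a = -(a - b) := by abel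
          rw [this, hIr] at *
          exact AddSubgroup.neg_mem _ hab
        have : x - a = (x - b) + (b - a) := by abel
        rw [this]; exact hI_add h hba
    -- the equivalence with the quotient group
    let S := {s : Set G | ∃ a : G, s = {x : G | Relation.ReflTransGen E a x}}
    have e : G ⧸ f.range ≃ S := by
      refine Equiv.ofBijective
        (Quotient.lift (fun a : G => (⟨{x : G | Relation.ReflTransGen E a x}, a, rfl⟩ : S)) ?_) ?_
      · intro a b hab
        have hab' : b - a ∈ I := by
          rw [hIr]
          have := QuotientAddGroup.leftRel_apply.mp hab
          simpa [neg_add_eq_sub] using this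
        have hba : a - b ∈ I := by
          have : a - b = -(b - a) := by abel
          rw [this, hIr] at *
          exact AddSubgroup.neg_mem _ hab'
        ext1
        simp only
        rw [hcomp a, hcomp b, hcompeq a b hba]
      · constructor
        · intro qa qb h
          induction qa using Quotient.inductionOn with
          | h a =>
          induction qb using Quotient.inductionOn with
          | h b =>
          simp only [Quotient.lift_mk, Subtype.mk.injEq] at h
          have ha : a ∈ {x : G | Relation.ReflTransGen E a x} := Relation.ReflTransGen.refl
          rw [h] at ha
          have : a - b ∈ I := (rtg b a).mp ha
          apply Quotient.sound
          rw [hIr] at this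
          have h2 : -a + b = -(a - b) := by abel
          exact QuotientAddGroup.leftRel_apply.mpr (h2 ▸ AddSubgroup.neg_mem _ this)
        · rintro ⟨s, a, rfl⟩
          exact ⟨Quotient.mk _ a, rfl⟩
    have hcard : Nat.card S = Nat.card (G ⧸ f.range) := Nat.card_congr e.symm
    have hlag : Nat.card G = Nat.card (G ⧸ f.range) * Nat.card f.range :=
      AddSubgroup.card_eq_card_quotient_mul_card_addSubgroup f.range
    have hIcard : Nat.card I = Nat.card f.range := by
      rw [hIr]; rfl
    have hpos : 0 < Nat.card f.range := Nat.card_pos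
    show Nat.card S = Nat.card G / Nat.card I
    rw [hcard, hIcard, hlag, Nat.mul_div_cancel _ hpos]
end

section
/- Let G be a finite (additive) abelian group and let t₁, t₂ be automorphisms of G, with E₁ and E₂ the edge relations of the Cayley graphs of the Alexander quandles A_{t₁}(G) and A_{t₂}(G) respectively. Then there exists a bijection e : G → G such that E₁(a,c) holds iff E₂(e(a), e(c)) holds for all a, c ∈ G (i.e. the two Cayley graphs are isomorphic as directed graphs) if and only if |im(id − t₁)| = |im(id − t₂)|. -/
open QuotientAddGroup

private def rsub {G : Type*} [AddCommGroup G] (t : G ≃+ G) : AddSubgroup G where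
  carrier := Set.range fun d : G => d - t d
  zero_mem' := ⟨0, by simp⟩
  add_mem' := by
    rintro _ _ ⟨a, rfl⟩ ⟨b, rfl⟩
    exact ⟨a + b, by simp only [map_add]; abel⟩
  neg_mem' := by
    rintro _ ⟨a, rfl⟩
    exact ⟨-a, by simp only [map_neg]; abel⟩

private lemma E_iff_mem {G : Type*} [AddCommGroup G] (t : G ≃+ G) (E : G → G → Prop)
    (hE : ∀ a c : G, E a c ↔ ∃ y : G, c = t a + y - t y) (a c : G) :
    E a c ↔ c - a ∈ rsub t := by
  rw [hE]
  constructor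
  · rintro ⟨y, rfl⟩
    exact ⟨y - a, by simp only [map_sub]; abel⟩
  · rintro ⟨z, hz⟩
    have hz' : z - t z = c - a := hz
    refine ⟨z + a, ?_⟩
    have hc : c = z - t z + a := by rw [hz']; abel
    rw [map_add, hc]; abel

private lemma E_iff_mk {G : Type*} [AddCommGroup G] (t : G ≃+ G) (E : G → G → Prop)
    (hE : ∀ a c : G, E a c ↔ ∃ y : G, c = t a + y - t y) (a c : G) :
    E a c ↔ (a : G ⧸ rsub t) = (c : G ⧸ rsub t) := by
  rw [E_iff_mem t E hE, QuotientAddGroup.eq, neg_add_eq_sub]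

/-- For a finite abelian group `G` and automorphisms `t₁, t₂`, the Cayley graphs
of the Alexander quandles `A_{t₁}(G)` and `A_{t₂}(G)` are isomorphic as directed
graphs iff `|im(id - t₁)| = |im(id - t₂)|`. -/
theorem alexander_quandle_cayley_iso_iff (G : Type*) [AddCommGroup G] [Finite G]
    (t₁ t₂ : G ≃+ G) (E₁ E₂ : G → G → Prop)
    (hE₁ : ∀ a c : G, E₁ a c ↔ ∃ y : G, c = t₁ a + y - t₁ y)
    (hE₂ : ∀ a c : G, E₂ a c ↔ ∃ y : G, c = t₂ a + y - t₂ y) :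
    (∃ e : G ≃ G, ∀ a c : G, E₁ a c ↔ E₂ (e a) (e c)) ↔
      Nat.card (Set.range fun d : G => d - t₁ d) =
        Nat.card (Set.range fun d : G => d - t₂ d) := by
  have hcard₁ : Nat.card (Set.range fun d : G => d - t₁ d) = Nat.card (rsub t₁) := rfl
  have hcard₂ : Nat.card (Set.range fun d : G => d - t₂ d) = Nat.card (rsub t₂) := rfl
  rw [hcard₁, hcard₂]
  constructor
  · rintro ⟨e, he⟩
    -- count out-neighborhoods of 0 and e 0
    have key : ∀ (t : G ≃+ G) (a : G), Nat.card {c : G | c - a ∈ rsub t} = Nat.card (rsub t) := by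
      intro t a
      have : {c : G | c - a ∈ rsub t} = (fun h : G => h + a) '' (rsub t : Set G) := by
        ext c
        simp only [Set.mem_setOf_eq, Set.mem_image, SetLike.mem_coe]
        constructor
        · intro h; exact ⟨c - a, h, by abel⟩
        · rintro ⟨h, hh, rfl⟩; simpa using hh
      rw [this, Nat.card_coe_set_eq,
        Set.ncard_image_of_injective _ (add_left_injective a)]
      rfl
    have himg : {c : G | c - e 0 ∈ rsub t₂} = e '' {c : G | c - (0:G) ∈ rsub t₁} := by
      ext c
      simp only [Set.mem_setOf_eq, Set.mem_image]
      constructor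
      · intro h
        refine ⟨e.symm c, ?_, e.apply_symm_apply c⟩
        rw [← E_iff_mem t₁ E₁ hE₁, he, e.apply_symm_apply, E_iff_mem t₂ E₂ hE₂]
        exact h
      · rintro ⟨x, hx, rfl⟩
        rw [← E_iff_mem t₂ E₂ hE₂, ← he, E_iff_mem t₁ E₁ hE₁]
        exact hx
    have := key t₂ (e 0)
    rw [himg, Nat.card_coe_set_eq, Set.ncard_image_of_injective _ e.injective,
      ← Nat.card_coe_set_eq, key t₁ 0] at this
    exact this
  · intro h
    -- cardinalities of quotients agree
    have hqcard : Nat.card (G ⧸ rsub t₁) = Nat.card (G ⧸ rsub t₂) := by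
      have h1 := AddSubgroup.card_eq_card_quotient_mul_card_addSubgroup (rsub t₁)
      have h2 := AddSubgroup.card_eq_card_quotient_mul_card_addSubgroup (rsub t₂)
      have hpos : 0 < Nat.card (rsub t₁) := Nat.card_pos
      apply Nat.eq_of_mul_eq_mul_right hpos
      rw [← h1]
      conv_lhs => rw [h2, ← h]
    obtain ⟨τ⟩ := Finite.card_eq.mp hqcard
    obtain ⟨σ⟩ := Finite.card_eq.mp h
    have hmem : ∀ a : G, a - (QuotientAddGroup.mk a : G ⧸ rsub t₁).out ∈ rsub t₁ := by
      intro a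
      have := QuotientAddGroup.eq.mp (QuotientAddGroup.out_eq' (QuotientAddGroup.mk a : G ⧸ rsub t₁))
      rwa [neg_add_eq_sub] at this
    set f : G → G := fun a =>
      (τ (QuotientAddGroup.mk a)).out + (σ ⟨a - (QuotientAddGroup.mk a : G ⧸ rsub t₁).out, hmem a⟩ : G)
      with hf
    have hmkf : ∀ a : G, (QuotientAddGroup.mk (f a) : G ⧸ rsub t₂) = τ (QuotientAddGroup.mk a) := by
      intro a
      rw [hf]
      have : (QuotientAddGroup.mk ((τ (QuotientAddGroup.mk a)).out) : G ⧸ rsub t₂)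
          = τ (QuotientAddGroup.mk a) := QuotientAddGroup.out_eq' _
      rw [← this]
      symm
      rw [QuotientAddGroup.eq]
      simp only [neg_add_cancel_left]
      exact (σ _).2
    have hinj : Function.Injective f := by
      intro a b hab
      have hq : (QuotientAddGroup.mk a : G ⧸ rsub t₁) = QuotientAddGroup.mk b := by
        apply τ.injective
        rw [← hmkf a, ← hmkf b, hab]
      have houteq : (QuotientAddGroup.mk a : G ⧸ rsub t₁).out = (QuotientAddGroup.mk b : G ⧸ rsub t₁).out := by rw [hq]
      rw [hf] at hab
      simp only at hab
      have h1 : (τ (QuotientAddGroup.mk a : G ⧸ rsub t₁)).out = (τ (QuotientAddGroup.mk b)).out := by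
        rw [hq]
      rw [h1] at hab
      have hval : a - (QuotientAddGroup.mk a : G ⧸ rsub t₁).out
          = b - (QuotientAddGroup.mk b : G ⧸ rsub t₁).out :=
        congrArg Subtype.val (σ.injective (Subtype.ext (add_left_cancel hab)))
      rw [houteq] at hval
      exact sub_left_injective hval
    have hbij : Function.Bijective f := (Finite.injective_iff_bijective).mp hinj
    refine ⟨Equiv.ofBijective f hbij, fun a c => ?_⟩
    rw [E_iff_mk t₁ E₁ hE₁, E_iff_mk t₂ E₂ hE₂]
    show _ ↔ (QuotientAddGroup.mk (f a) : G ⧸ rsub t₂) = QuotientAddGroup.mk (f c)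
    rw [hmkf, hmkf, τ.apply_eq_iff_eq]
end

section
/- Let G be a finite group, φ an automorphism of G, and A_φ(G) the generalized Alexander quandle with operation x ▷ y = φ(x·y⁻¹)·y. Let H = {g ∈ G : φ(g) = g} be the subgroup of fixed points of φ. Then for every x ∈ G, the out-degree of x in the Cayley graph of A_φ(G), i.e. the cardinality of the set {x ▷ y : y ∈ G}, equals the index [G : H]. -/
/-- For a finite group `G` and automorphism `φ`, with `H` the subgroup of fixed
points of `φ`, every vertex `x` of the Cayley graph of the generalized
Alexander quandle `A_φ(G)` (operation `x ▷ y = φ (x * y⁻¹) * y`) has out-degree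
`[G : H]`: the set `{x ▷ y : y ∈ G}` has exactly `H.index` elements. -/
theorem gen_alexander_cayley_outdegree (G : Type*) [Group G] [Finite G]
    (φ : G ≃* G) (H : Subgroup G) (hH : ∀ g : G, g ∈ H ↔ φ g = g) :
    ∀ x : G, Nat.card {c : G | ∃ y : G, c = φ (x * y⁻¹) * y} = H.index := by
  intro x
  set f : G → G := fun y => φ (x * y⁻¹) * y with hf
  have hset : {c : G | ∃ y : G, c = φ (x * y⁻¹) * y} = Set.range f := by
    ext c; simp [hf, Set.range, eq_comm]
  rw [hset]
  have hker : Setoid.ker f = QuotientGroup.rightRel H := by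
    ext y z
    show f y = f z ↔ _
    rw [QuotientGroup.rightRel_apply, hH]
    simp only [hf, map_mul, map_inv]
    constructor
    · intro h
      rw [mul_assoc, mul_assoc] at h
      have h2 : (φ y)⁻¹ * y = (φ z)⁻¹ * z := mul_left_cancel h
      have h3 : φ z * (φ y)⁻¹ = z * y⁻¹ := by
        have := congrArg (fun g => φ z * g * y⁻¹) h2
        simpa [mul_assoc] using this
      simpa [map_mul, map_inv] using h3
    · intro h
      have h3 : φ z * (φ y)⁻¹ = z * y⁻¹ := by simpa [map_mul, map_inv] using h
      have h2 : (φ y)⁻¹ * y = (φ z)⁻¹ * z := by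
        have := congrArg (fun g => (φ z)⁻¹ * g * y) h3
        simpa [mul_assoc] using this
      rw [mul_assoc, mul_assoc, h2]
  have e1 : Set.range f ≃ Quotient (Setoid.ker f) :=
    (Setoid.quotientKerEquivRange f).symm
  have e2 : Quotient (QuotientGroup.rightRel H) ≃ (G ⧸ H) :=
    QuotientGroup.quotientRightRelEquivQuotientLeftRel H
  rw [Nat.card_congr e1, hker, Nat.card_congr e2]
  rfl
end

section
/- Let G be a finite group, φ an automorphism of G, and A_φ(G) the generalized Alexander quandle with operation x ▷ y = φ(x·y⁻¹)·y. Let H = {g ∈ G : φ(g) = g} be the subgroup of fixed points of φ. Then for every z ∈ G, the in-degree of z in the Cayley graph of A_φ(G), i.e. the cardinality of the set {x ∈ G : ∃ y ∈ G, x ▷ y = z}, equals the index [G : H]. Consequently the Cayley graph of A_φ(G) is regular with in-degree and out-degree [G : H] at every vertex. -/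
private lemma card_range_aux (G : Type*) [Group G] [Finite G]
    (φ : G ≃* G) (H : Subgroup G) (hH : ∀ g : G, g ∈ H ↔ φ g = g) :
    Nat.card (Set.range (fun y : G => y * (φ y)⁻¹)) = H.index := by
  rw [Subgroup.index]
  apply Nat.card_congr
  symm
  refine Equiv.ofBijective
    (Quotient.lift (fun a : G => (⟨a * (φ a)⁻¹, a, rfl⟩ :
      Set.range (fun y : G => y * (φ y)⁻¹))) ?_) ⟨?_, ?_⟩
  · intro a b hab
    have h : a⁻¹ * b ∈ H := (QuotientGroup.leftRel_apply).mp hab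
    have h2 : (φ a)⁻¹ * φ b = a⁻¹ * b := by
      have := (hH _).mp h
      simpa only [map_mul, map_inv] using this
    have h3 : φ b = φ a * (a⁻¹ * b) := by rw [← h2]; group
    apply Subtype.ext
    show a * (φ a)⁻¹ = b * (φ b)⁻¹
    rw [h3]; group
  · intro a b
    induction a using Quotient.inductionOn with | h a =>
    induction b using Quotient.inductionOn with | h b =>
    intro hab
    simp only [Quotient.lift_mk, Subtype.mk.injEq] at hab
    apply Quotient.sound
    apply (QuotientGroup.leftRel_apply (s := H)).mpr
    apply (hH _).mpr
    have h2 : (φ a)⁻¹ * φ b = a⁻¹ * b := by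
      calc (φ a)⁻¹ * φ b = a⁻¹ * (a * (φ a)⁻¹) * φ b := by group
        _ = a⁻¹ * (b * (φ b)⁻¹) * φ b := by rw [show a * (φ a)⁻¹ = b * (φ b)⁻¹ from congrArg Subtype.val hab]
        _ = a⁻¹ * b := by group
    calc φ (a⁻¹ * b) = (φ a)⁻¹ * φ b := by simp [map_mul, map_inv]
      _ = a⁻¹ * b := h2
  · rintro ⟨c, y, rfl⟩
    exact ⟨Quotient.mk _ y, rfl⟩

/-- For a finite group `G` and automorphism `φ`, with `H` the subgroup of fixed
points of `φ`, every vertex `z` of the Cayley graph of the generalized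
Alexander quandle `A_φ(G)` (operation `x ▷ y = φ (x * y⁻¹) * y`) has in-degree
`[G : H]`; consequently the Cayley graph is regular, with both in-degree and
out-degree of every vertex equal to `[G : H]`. -/
theorem gen_alexander_cayley_indegree_regular (G : Type*) [Group G] [Finite G]
    (φ : G ≃* G) (H : Subgroup G) (hH : ∀ g : G, g ∈ H ↔ φ g = g) :
    (∀ z : G, Nat.card {x : G | ∃ y : G, φ (x * y⁻¹) * y = z} = H.index) ∧
    (∀ x : G, Nat.card {c : G | ∃ y : G, c = φ (x * y⁻¹) * y} = H.index) := by
  set S : Set G := Set.range (fun y : G => y * (φ y)⁻¹) with hS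
  have hcard := card_range_aux G φ H hH
  constructor
  · intro z
    have hset : {x : G | ∃ y : G, φ (x * y⁻¹) * y = z}
        = (fun x : G => z⁻¹ * φ x) ⁻¹' S := by
      ext x
      simp only [Set.mem_setOf_eq, Set.mem_preimage, hS, Set.mem_range]
      constructor
      · rintro ⟨y, hy⟩
        subst hy
        refine ⟨y⁻¹, ?_⟩
        simp only [map_mul, map_inv, inv_inv, mul_inv_rev]
        group
      · rintro ⟨y, hy⟩
        refine ⟨y⁻¹, ?_⟩
        have hz : z = φ x * (y * (φ y)⁻¹)⁻¹ := by rw [hy]; group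
        rw [hz]
        simp only [map_mul, map_inv, inv_inv]
        group
    have hinj : Function.Injective (fun x : G => z⁻¹ * φ x) := by
      intro a b hab
      simpa using hab
    have hsub : S ⊆ Set.range (fun x : G => z⁻¹ * φ x) := by
      intro s _
      exact ⟨φ.symm (z * s), by simp⟩
    rw [hset, Nat.card_preimage_of_injective hinj hsub, hcard]
  · intro x
    have hset : {c : G | ∃ y : G, c = φ (x * y⁻¹) * y}
        = (fun c : G => ((φ x)⁻¹ * c)⁻¹) ⁻¹' S := by
      ext c
      simp only [Set.mem_setOf_eq, Set.mem_preimage, hS, Set.mem_range]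
      constructor
      · rintro ⟨y, rfl⟩
        refine ⟨y⁻¹, ?_⟩
        simp only [map_mul, map_inv, inv_inv, mul_inv_rev]
        group
      · rintro ⟨y, hy⟩
        refine ⟨y⁻¹, ?_⟩
        have hc : c = φ x * (y * (φ y)⁻¹)⁻¹ := by rw [hy]; group
        rw [hc]
        simp only [map_mul, map_inv, inv_inv]
        group
    have hinj : Function.Injective (fun c : G => ((φ x)⁻¹ * c)⁻¹) := by
      intro a b hab
      simpa using hab
    have hsub : S ⊆ Set.range (fun c : G => ((φ x)⁻¹ * c)⁻¹) := by
      intro s _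
      exact ⟨φ x * s⁻¹, by simp⟩
    rw [hset, Nat.card_preimage_of_injective hinj hsub, hcard]
end

section
/- Let G be a finite group, h ∈ G, and φ the inner automorphism φ(g) = h·g·h⁻¹. Let A_φ(G) be the generalized Alexander quandle with operation x ▷ y = φ(x·y⁻¹)·y, with edge relation E of its Cayley graph, and let N = ⟨[h,g] : g ∈ G⟩ be the subgroup of G generated by all commutators [h,g] = h·g·h⁻¹·g⁻¹. Then for every x ∈ G, the set of elements reachable from x by a directed path in the Cayley graph (the forward orbit of x) is exactly the left coset xN. -/
/-- Let `G` be a finite group, `h ∈ G`, and `φ(g) = h * g * h⁻¹`.  In the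
Cayley graph of the generalized Alexander quandle `A_φ(G)` (operation
`x ▷ y = φ (x * y⁻¹) * y = h * (x * y⁻¹) * h⁻¹ * y`), the forward orbit of any
`x ∈ G` (the set of endpoints of directed paths from `x`) is exactly the left
coset `x * N`, where `N = ⟨[h,g] : g ∈ G⟩` is the subgroup generated by the
commutators `[h,g] = h * g * h⁻¹ * g⁻¹`. -/
theorem gen_alexander_inner_forward_orbit (G : Type*) [Group G] [Finite G]
    (h : G) (E : G → G → Prop)
    (hE : ∀ a c : G, E a c ↔ ∃ y : G, c = h * (a * y⁻¹) * h⁻¹ * y)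
    (N : Subgroup G)
    (hN : N = Subgroup.closure {n : G | ∃ g : G, n = h * g * h⁻¹ * g⁻¹}) :
    ∀ x : G, {c : G | Relation.ReflTransGen E x c} =
      (fun n : G => x * n) '' (N : Set G) := by
  -- a single edge can be reversed by a directed path (finiteness)
  have hsymm1 : ∀ a c : G, E a c → Relation.ReflTransGen E c a := by
    intro a c hac
    rw [hE] at hac
    obtain ⟨y, rfl⟩ := hac
    set f : G → G := fun b => h * (b * y⁻¹) * h⁻¹ * y with hf
    have hEf : ∀ b, E b (f b) := fun b => (hE b (f b)).2 ⟨y, rfl⟩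
    have hfi : Function.Injective f := by
      intro u v huv
      simp only [hf] at huv
      have : h * (u * y⁻¹) = h * (v * y⁻¹) := by
        exact mul_right_cancel (mul_right_cancel huv)
      exact mul_right_cancel (mul_left_cancel this)
    have hiter : ∀ (n : ℕ) (b : G), Relation.ReflTransGen E b (f^[n] b) := by
      intro n
      induction n with
      | zero => intro b; exact Relation.ReflTransGen.refl
      | succ n ih =>
          intro b
          have h1 := ih b
          have h2 : E (f^[n] b) (f (f^[n] b)) := hEf _
          rw [Function.iterate_succ_apply']
          exact h1.tail h2
    obtain ⟨i, j, hij, heq⟩ : ∃ i j : ℕ, i ≠ j ∧ f^[i] a = f^[j] a := by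
      obtain ⟨i, j, hij, heq⟩ := Finite.exists_ne_map_eq_of_infinite (fun n : ℕ => f^[n] a)
      exact ⟨i, j, hij, heq⟩
    -- wlog i < j
    have key : ∀ i j : ℕ, i < j → f^[i] a = f^[j] a → Relation.ReflTransGen E (f a) a := by
      intro i j hlt heq
      obtain ⟨k, rfl⟩ := Nat.exists_eq_add_of_lt hlt
      have : f^[i] a = f^[i] (f^[k + 1] a) := by
        rw [heq]; rw [← Function.iterate_add_apply]; ring_nf
      have ha : a = f^[k + 1] a := (hfi.iterate i) this
      have : Relation.ReflTransGen E (f a) (f^[k] (f a)) := hiter k (f a)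
      rwa [← Function.iterate_succ_apply, ← ha] at this
    rcases Nat.lt_or_ge i j with hlt | hge
    · exact key i j hlt heq
    · exact key j i (lt_of_le_of_ne hge hij.symm) heq.symm
  -- reachability is symmetric
  have hsymm : ∀ a c : G, Relation.ReflTransGen E a c → Relation.ReflTransGen E c a := by
    intro a c hac
    induction hac with
    | refl => exact Relation.ReflTransGen.refl
    | tail hab hbc ih => exact (hsymm1 _ _ hbc).trans ih
  -- key reachability: two-step move
  have key2 : ∀ b y₁ y₂ : G,
      Relation.ReflTransGen E b (b * (y₁⁻¹ * h * y₁) * (y₂⁻¹ * h⁻¹ * y₂)) := by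
    intro b y₁ y₂
    set a : G := h⁻¹ * b * y₁⁻¹ * h * y₁ with ha
    have h1 : E a b := (hE a b).2 ⟨y₁, by rw [ha]; group⟩
    have h2 : E a (h * (a * y₂⁻¹) * h⁻¹ * y₂) := (hE _ _).2 ⟨y₂, rfl⟩
    have heq : h * (a * y₂⁻¹) * h⁻¹ * y₂ = b * (y₁⁻¹ * h * y₁) * (y₂⁻¹ * h⁻¹ * y₂) := by
      rw [ha]; group
    have := (hsymm1 a b h1).tail h2
    rwa [heq] at this
  -- every element of N is reachable from any base point
  have genreach : ∀ n : G, n ∈ N → ∀ b : G, Relation.ReflTransGen E b (b * n) := by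
    rw [hN]
    intro n hn
    induction hn using Subgroup.closure_induction with
    | mem n hn =>
        obtain ⟨g, rfl⟩ := hn
        intro b
        have := key2 b 1 g⁻¹
        have heq : b * ((1:G)⁻¹ * h * 1) * ((g⁻¹)⁻¹ * h⁻¹ * g⁻¹) = b * (h * g * h⁻¹ * g⁻¹) := by
          group
        rwa [heq] at this
    | one => intro b; rw [mul_one]
    | mul n m _ _ ihn ihm =>
        intro b
        have h1 := ihn b
        have h2 := ihm (b * n)
        rw [← mul_assoc]
        exact h1.trans h2
    | inv n _ ihn =>
        intro b
        have h1 := ihn (b * n⁻¹)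
        simp only [inv_mul_cancel_right] at h1
        exact hsymm _ _ h1
  intro x
  ext c
  simp only [Set.mem_setOf_eq, Set.mem_image, SetLike.mem_coe]
  constructor
  · intro hc
    refine ⟨x⁻¹ * c, ?_, by group⟩
    induction hc with
    | refl => simpa using N.one_mem
    | @tail a c' hab hbc ih =>
        rw [hE] at hbc
        obtain ⟨y, rfl⟩ := hbc
        have m1 : a⁻¹ * h * a * h⁻¹ ∈ N := by
          have : h * a⁻¹ * h⁻¹ * (a⁻¹)⁻¹ ∈ N := by
            rw [hN]; exact Subgroup.subset_closure ⟨a⁻¹, rfl⟩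
          have := N.inv_mem this
          simpa [mul_assoc] using this
        have m2 : h * y⁻¹ * h⁻¹ * y ∈ N := by
          rw [hN]; exact Subgroup.subset_closure ⟨y⁻¹, by group⟩
        have : (x⁻¹ * a) * ((a⁻¹ * h * a * h⁻¹) * (h * y⁻¹ * h⁻¹ * y)) ∈ N :=
          N.mul_mem ih (N.mul_mem m1 m2)
        have heq : x⁻¹ * (h * (a * y⁻¹) * h⁻¹ * y)
            = (x⁻¹ * a) * ((a⁻¹ * h * a * h⁻¹) * (h * y⁻¹ * h⁻¹ * y)) := by group
        rwa [heq]
  · rintro ⟨n, hn, rfl⟩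
    exact genreach n hn x
end

section
/- Let G be a finite group, h ∈ G, and φ the inner automorphism φ(g) = h·g·h⁻¹. Let E be the edge relation of the Cayley graph of the generalized Alexander quandle A_φ(G). Then for every g ∈ G, right multiplication by g is a graph isomorphism: for all x, y ∈ G, E(x,y) holds if and only if E(x·g, y·g) holds. In particular, with N = ⟨[h,g] : g ∈ G⟩, the induced subgraphs on the connected components (which are the cosets of N) are pairwise isomorphic, and the Cayley graph has exactly [G : N] connected components, each of size |N|. -/
/-- Let `G` be a finite group, `h ∈ G`, `φ(g) = h * g * h⁻¹`, and `E` the edge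
relation of the Cayley graph of the generalized Alexander quandle `A_φ(G)`
(operation `x ▷ y = h * (x * y⁻¹) * h⁻¹ * y`).  Then right multiplication by
any `g ∈ G` is a graph automorphism: `E x y ↔ E (x*g) (y*g)`.  With
`N = ⟨[h,g] : g ∈ G⟩`, the connected components are exactly the cosets of `N`,
they are pairwise isomorphic as induced subgraphs (via a global automorphism
carrying one onto the other), there are `[G : N]` of them, and each has `|N|`
elements. -/
theorem gen_alexander_inner_components (G : Type*) [Group G] [Finite G]
    (h : G) (E : G → G → Prop)
    (hE : ∀ a c : G, E a c ↔ ∃ y : G, c = h * (a * y⁻¹) * h⁻¹ * y)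
    (N : Subgroup G)
    (hN : N = Subgroup.closure {n : G | ∃ g : G, n = h * g * h⁻¹ * g⁻¹}) :
    (∀ g x y : G, E x y ↔ E (x * g) (y * g)) ∧
    (∀ x c : G, Relation.ReflTransGen E x c ↔ x⁻¹ * c ∈ N) ∧
    (∀ x₁ x₂ : G, ∃ e : G ≃ G,
      (∀ c : G, Relation.ReflTransGen E x₁ c ↔ Relation.ReflTransGen E x₂ (e c)) ∧
      (∀ a b : G, E a b ↔ E (e a) (e b))) ∧
    Nat.card {s : Set G | ∃ x : G, s = {c : G | Relation.ReflTransGen E x c}} =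
      N.index ∧
    (∀ x : G, Nat.card {c : G | Relation.ReflTransGen E x c} = Nat.card N) := by
  -- generator membership
  have memS : ∀ g : G, h * g * h⁻¹ * g⁻¹ ∈ N := fun g => by
    rw [hN]; exact Subgroup.subset_closure ⟨g, rfl⟩
  -- equivariance of edges under right multiplication
  have equi : ∀ g x y : G, E x y ↔ E (x * g) (y * g) := by
    intro g x y
    rw [hE, hE]
    constructor
    · rintro ⟨w, rfl⟩; exact ⟨w * g, by group⟩
    · rintro ⟨z, hz⟩
      refine ⟨z * g⁻¹, ?_⟩
      have hy : y = (h * (x * g * z⁻¹) * h⁻¹ * z) * g⁻¹ := by rw [← hz]; group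
      rw [hy]; group
  -- equivariance of reachability
  have reach_mul : ∀ (g a b : G), Relation.ReflTransGen E a b →
      Relation.ReflTransGen E (a * g) (b * g) := by
    intro g a b hab
    induction hab with
    | refl => exact .refl
    | tail _ he ih => exact ih.tail ((equi g _ _).mp he)
  -- edge reversal via finiteness
  have rev : ∀ a c : G, E a c → Relation.ReflTransGen E c a := by
    intro a c hac
    rw [hE] at hac
    obtain ⟨y, rfl⟩ := hac
    have hcv : h * (a * y⁻¹) * h⁻¹ * y = h * a * (y⁻¹ * h⁻¹ * y) := by group
    have L : ∀ (n : ℕ) (b : G),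
        Relation.ReflTransGen E b (h ^ n * b * (y⁻¹ * h⁻¹ * y) ^ n) := by
      intro n
      induction n with
      | zero => intro b; simpa using Relation.ReflTransGen.refl
      | succ n ih =>
        intro b
        refine (ih b).tail ?_
        rw [hE]
        exact ⟨y, by rw [pow_succ h, pow_succ (y⁻¹ * h⁻¹ * y)]; group⟩
    have hm : 0 < orderOf h := orderOf_pos h
    have hvm : (y⁻¹ * h⁻¹ * y) ^ orderOf h = 1 := by
      have hv2 : y⁻¹ * h⁻¹ * y = y⁻¹ * h⁻¹ * (y⁻¹)⁻¹ := by group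
      rw [hv2, conj_pow, inv_pow, pow_orderOf_eq_one, inv_one, mul_one]
      group
    have h1 : h ^ (orderOf h - 1) * h = 1 := by
      rw [← pow_succ, Nat.sub_add_cancel hm, pow_orderOf_eq_one]
    have h2 : (y⁻¹ * h⁻¹ * y) * (y⁻¹ * h⁻¹ * y) ^ (orderOf h - 1) = 1 := by
      rw [← pow_succ', Nat.sub_add_cancel hm, hvm]
    have := L (orderOf h - 1) (h * a * (y⁻¹ * h⁻¹ * y))
    have heq : h ^ (orderOf h - 1) * (h * a * (y⁻¹ * h⁻¹ * y)) *
        (y⁻¹ * h⁻¹ * y) ^ (orderOf h - 1) = a := by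
      calc h ^ (orderOf h - 1) * (h * a * (y⁻¹ * h⁻¹ * y)) *
            (y⁻¹ * h⁻¹ * y) ^ (orderOf h - 1)
          = (h ^ (orderOf h - 1) * h) * (a *
            ((y⁻¹ * h⁻¹ * y) * (y⁻¹ * h⁻¹ * y) ^ (orderOf h - 1))) := by
            simp only [mul_assoc]
        _ = a := by rw [h1, h2, one_mul, mul_one]
    rw [heq] at this
    rwa [hcv]
  -- symmetry of reachability
  have rsymm : ∀ a b : G, Relation.ReflTransGen E a b → Relation.ReflTransGen E b a := by
    intro a b hab
    induction hab with
    | refl => exact .refl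
    | tail _ he ih => exact (rev _ _ he).trans ih
  -- normality of N
  have norm : ∀ k n : G, n ∈ N → k * n * k⁻¹ ∈ N := by
    intro k n hn
    rw [hN] at hn
    induction hn using Subgroup.closure_induction with
    | mem m hm =>
      obtain ⟨g, rfl⟩ := hm
      have key : k * (h * g * h⁻¹ * g⁻¹) * k⁻¹
          = (h * k * h⁻¹ * k⁻¹)⁻¹ * (h * (k * g) * h⁻¹ * (k * g)⁻¹) := by group
      rw [key]
      exact mul_mem (inv_mem (memS k)) (memS (k * g))
    | one => simpa using one_mem N
    | mul a b _ _ pa pb =>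
      have key : k * (a * b) * k⁻¹ = (k * a * k⁻¹) * (k * b * k⁻¹) := by group
      rw [key]; exact mul_mem pa pb
    | inv a _ pa =>
      have key : k * a⁻¹ * k⁻¹ = (k * a * k⁻¹)⁻¹ := by group
      rw [key]; exact inv_mem pa
  -- one step lands in the coset
  have stepN : ∀ a c : G, E a c → a⁻¹ * c ∈ N := by
    intro a c hac
    rw [hE] at hac
    obtain ⟨y, rfl⟩ := hac
    have key : a⁻¹ * (h * (a * y⁻¹) * h⁻¹ * y)
        = (h * a⁻¹ * h⁻¹ * (a⁻¹)⁻¹)⁻¹ * (h * y⁻¹ * h⁻¹ * (y⁻¹)⁻¹) := by group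
    rw [key]
    exact mul_mem (inv_mem (memS a⁻¹)) (memS y⁻¹)
  have fwd : ∀ x c : G, Relation.ReflTransGen E x c → x⁻¹ * c ∈ N := by
    intro x c hxc
    induction hxc with
    | refl => simpa using one_mem N
    | @tail b c _ he ih =>
      have key : x⁻¹ * c = (x⁻¹ * b) * (b⁻¹ * c) := by group
      rw [key]; exact mul_mem ih (stepN _ _ he)
  -- everything in N is reachable from 1
  have one_reach : ∀ n : G, n ∈ N → Relation.ReflTransGen E 1 n := by
    intro n hn
    rw [hN] at hn
    induction hn using Subgroup.closure_induction with
    | mem m hm =>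
      obtain ⟨g, rfl⟩ := hm
      refine Relation.ReflTransGen.single ?_
      rw [hE]
      exact ⟨g⁻¹, by group⟩
    | one => exact .refl
    | mul a b _ _ pa pb =>
      have := reach_mul b 1 a pa
      rw [one_mul] at this
      exact pb.trans this
    | inv a _ pa =>
      have := reach_mul a⁻¹ a 1 (rsymm _ _ pa)
      rw [mul_inv_cancel, one_mul] at this
      exact this
  have bwd : ∀ x c : G, x⁻¹ * c ∈ N → Relation.ReflTransGen E x c := by
    intro x c hc
    have h2 : x * (x⁻¹ * c) * x⁻¹ ∈ N := norm x _ hc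
    have key : x * (x⁻¹ * c) * x⁻¹ = c * x⁻¹ := by group
    rw [key] at h2
    have := reach_mul x 1 (c * x⁻¹) (one_reach _ h2)
    rwa [one_mul, inv_mul_cancel_right] at this
  have comp : ∀ x c : G, Relation.ReflTransGen E x c ↔ x⁻¹ * c ∈ N :=
    fun x c => ⟨fwd x c, bwd x c⟩
  refine ⟨equi, comp, ?_, ?_, ?_⟩
  · -- pairwise isomorphic components
    intro x₁ x₂
    refine ⟨Equiv.mulRight (x₁⁻¹ * x₂), ?_, ?_⟩
    · intro c
      constructor
      · intro hc
        have := reach_mul (x₁⁻¹ * x₂) x₁ c hc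
        rwa [mul_inv_cancel_left] at this
      · intro hc
        have := reach_mul (x₁⁻¹ * x₂)⁻¹ x₂ (c * (x₁⁻¹ * x₂)) hc
        rwa [mul_inv_cancel_right, mul_inv_rev, inv_inv, mul_inv_cancel_left] at this
    · intro a b; exact equi (x₁⁻¹ * x₂) a b
  · -- number of components
    have e : (G ⧸ N) ≃ {s : Set G | ∃ x : G, s = {c : G | Relation.ReflTransGen E x c}} := by
      refine Equiv.ofBijective
        (Quotient.lift (fun x : G =>
          (⟨{c : G | Relation.ReflTransGen E x c}, ⟨x, rfl⟩⟩ :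
            {s : Set G | ∃ x : G, s = {c : G | Relation.ReflTransGen E x c}}))
          ?_) ⟨?_, ?_⟩
      · intro x y hxy
        have hxy' : x⁻¹ * y ∈ N := (QuotientGroup.leftRel_apply).mp hxy
        refine Subtype.ext ?_
        ext c
        simp only [Set.mem_setOf_eq, comp]
        constructor
        · intro hc
          have key : y⁻¹ * c = (x⁻¹ * y)⁻¹ * (x⁻¹ * c) := by group
          rw [key]; exact mul_mem (inv_mem hxy') hc
        · intro hc
          have key : x⁻¹ * c = (x⁻¹ * y) * (y⁻¹ * c) := by group
          rw [key]; exact mul_mem hxy' hc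
      · intro q₁ q₂
        induction q₁ using Quotient.ind with | _ x =>
        induction q₂ using Quotient.ind with | _ y =>
        intro hq
        have hsets : {c : G | Relation.ReflTransGen E x c}
            = {c : G | Relation.ReflTransGen E y c} := congrArg Subtype.val hq
        have hx : x ∈ {c : G | Relation.ReflTransGen E y c} := by
          rw [← hsets]; exact Relation.ReflTransGen.refl
        have hyx : y⁻¹ * x ∈ N := fwd y x hx
        have hxy : x⁻¹ * y ∈ N := by
          have k : x⁻¹ * y = (y⁻¹ * x)⁻¹ := by group
          rw [k]; exact inv_mem hyx
        exact Quotient.sound ((QuotientGroup.leftRel_apply).mpr hxy)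
      · rintro ⟨s, x, rfl⟩
        exact ⟨⟦x⟧, rfl⟩
    rw [← Nat.card_congr e]
    rfl
  · -- size of each component
    intro x
    refine Nat.card_congr (Equiv.ofBijective
      (fun c : {c : G | Relation.ReflTransGen E x c} =>
        (⟨x⁻¹ * c.1, fwd x c.1 c.2⟩ : N)) ⟨?_, ?_⟩)
    · rintro ⟨a, ha⟩ ⟨b, hb⟩ hab
      simp only [Subtype.mk.injEq, mul_right_inj] at hab
      exact Subtype.ext hab
    · rintro ⟨n, hn⟩
      refine ⟨⟨x * n, bwd x (x * n) (by simpa using hn)⟩, ?_⟩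
      simp
end
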